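/- For a tree T, the set of Edmonds–Gallai vertices equals the support of the null space: EG(T) = Supp(T). That is, a vertex v of T is missed by some maximum matching of T if and only if some null vector of the adjacency matrix of T is nonzero at v. -/

import Mathlib

open SimpleGraph Matrix

attribute [local instance] Classical.propDecidable

noncomputable section

variable {V : Type*}

/-- A graph is singular if its adjacency matrix (over ℝ) has nontrivial kernel. -/
def IsSingular [Fintype V] (G : SimpleGraph V) : Prop :=
  ∃ x : V → ℝ, x ≠ 0 ∧ G.adjMatrix ℝ *ᵥ x = 0

/-- The support of the null space of the adjacency matrix. -/
def nullSupp [Fintype V] (G : SimpleGraph V) : Set V :=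
  {v | ∃ x : V → ℝ, G.adjMatrix ℝ *ᵥ x = 0 ∧ x v ≠ 0}

/-- The core: all neighbours of supported vertices. -/
def core [Fintype V] (G : SimpleGraph V) : Set V :=
  ⋃ v ∈ nullSupp G, G.neighborSet v

/-- Vertex set of the N-forest: complement of the closed neighbourhood of the support. -/
def fnVerts [Fintype V] (G : SimpleGraph V) : Set V :=
  (nullSupp G ∪ core G)ᶜ

/-- A matching as a set of pairwise disjoint edges of `G`. -/
def IsMatchingSet (G : SimpleGraph V) (M : Set (Sym2 V)) : Prop :=
  M ⊆ G.edgeSet ∧ M.Pairwise fun e f => ∀ v : V, ¬(v ∈ e ∧ v ∈ f)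

/-- `M` saturates `v`. -/
def Saturates (M : Set (Sym2 V)) (v : V) : Prop := ∃ e ∈ M, v ∈ e

/-- A perfect matching saturates every vertex. -/
def IsPerfectMatchingSet (G : SimpleGraph V) (M : Set (Sym2 V)) : Prop :=
  IsMatchingSet G M ∧ ∀ v : V, Saturates M v

/-- Matching number. -/
def matchNum [Fintype V] (G : SimpleGraph V) : ℕ :=
  sSup {n | ∃ M : Set (Sym2 V), IsMatchingSet G M ∧ M.ncard = n}

/-- Maximum matchings. -/
def IsMaxMatching [Fintype V] (G : SimpleGraph V) (M : Set (Sym2 V)) : Prop :=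
  IsMatchingSet G M ∧ M.ncard = matchNum G

/-- Independent set of vertices. -/
def IsIndepSet (G : SimpleGraph V) (I : Set V) : Prop :=
  I.Pairwise fun a b => ¬ G.Adj a b

/-- Independence number. -/
def indepNum [Fintype V] (G : SimpleGraph V) : ℕ :=
  sSup {n | ∃ I : Set V, _root_.IsIndepSet G I ∧ I.ncard = n}

/-- Maximum independent sets. -/
def IsMaxIndep [Fintype V] (G : SimpleGraph V) (I : Set V) : Prop :=
  _root_.IsIndepSet G I ∧ I.ncard = _root_.indepNum G

/-- The graph `G` with all vertices in `S` deleted (kept as isolated vertices). -/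
def avoid (G : SimpleGraph V) (S : Set V) : SimpleGraph V where
  Adj a b := G.Adj a b ∧ a ∉ S ∧ b ∉ S
  symm := ⟨fun a b h => ⟨h.1.symm, h.2.2, h.2.1⟩⟩
  loopless := ⟨fun a h => G.loopless.irrefl a h.1⟩

/-- `G` is unicyclic: connected with as many edges as vertices. -/
def IsUnicyclic [Fintype V] (G : SimpleGraph V) : Prop :=
  G.Connected ∧ G.edgeFinset.card = Fintype.card V

/-- `C` is the vertex set of the (unique) cycle of `G`:
the induced subgraph on `C` is connected and 2-regular. -/
def IsCycleVerts [Fintype V] (G : SimpleGraph V) (C : Set V) : Prop :=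
  C.Nonempty ∧ (G.induce C).Connected ∧ ∀ v : C, (G.induce C).degree v = 2

/-- Vertices of the pendant tree of `G` at the cycle vertex `v`: all vertices
reachable from `v` after deleting the other cycle vertices. -/
def pendantVerts (G : SimpleGraph V) (C : Set V) (v : V) : Set V :=
  {u | (avoid G (C \ {v})).Reachable v u}

lemma mem_pendantVerts_self (G : SimpleGraph V) (C : Set V) (v : V) :
    v ∈ pendantVerts G C v := Reachable.refl v

/-- The pendant tree of `G` at `v` (as an induced subgraph). -/
def pendantTree (G : SimpleGraph V) (C : Set V) (v : V) :
    SimpleGraph (pendantVerts G C v) := G.induce (pendantVerts G C v)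

/-- The rest of the graph, `G − G{v}`. -/
def pendantRest (G : SimpleGraph V) (C : Set V) (v : V) :
    SimpleGraph ((pendantVerts G C v)ᶜ : Set V) := G.induce (pendantVerts G C v)ᶜ

/-- `v` is matched in a graph `H`: every maximum matching of `H` saturates `v`. -/
def MatchedIn {W : Type*} [Fintype W] (H : SimpleGraph W) (w : W) : Prop :=
  ∀ M : Set (Sym2 W), IsMaxMatching H M → Saturates M w

/-- A unicyclic graph is of Type I if some cycle vertex is matched in its pendant tree. -/
def TypeI [Fintype V] (G : SimpleGraph V) (C : Set V) : Prop :=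
  ∃ v ∈ C, MatchedIn (pendantTree G C v) ⟨v, mem_pendantVerts_self G C v⟩

/-- Type II: every cycle vertex is missed by some maximum matching of its pendant tree. -/
def TypeII [Fintype V] (G : SimpleGraph V) (C : Set V) : Prop :=
  ∀ v ∈ C, ¬ MatchedIn (pendantTree G C v) ⟨v, mem_pendantVerts_self G C v⟩

end

/-!
For a forest `F` on `n` vertices, `nullity A(F) + 2 ν(F) = n`: isolating a leaf and its
neighbour lowers the matching number `ν` by one and raises the nullity by two. A vertex `v` of
a tree `T` is missed by some maximum matching iff isolating it keeps `ν`, i.e. (by the formula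
applied to `T` and to `T` with `v` isolated) iff isolating `v` keeps the nullity. If some null
vector `x` has `x v ≠ 0`, symmetry of `A` forces `A z = 0` for every `z` with `z v = 0` that is
null away from `v`, so both null spaces are one dimension above their common section `x v = 0`;
otherwise the null space only grows, by the new null vector `Pi.single v 1`.
-/

theorem Submodule.finrank_inf_ker_add_one {K W : Type*} [Field K] [AddCommGroup W] [Module K W]
    [FiniteDimensional K W] {p : Submodule K W} {f : W →ₗ[K] K} {x : W} (hx : x ∈ p)
    (hfx : f x ≠ 0) : Module.finrank K ↥(p ⊓ LinearMap.ker f) + 1 = Module.finrank K p := by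
  have hf : f.domRestrict p ≠ 0 := fun h => hfx (LinearMap.congr_fun h ⟨x, hx⟩)
  rw [← Submodule.map_comap_subtype, Submodule.finrank_map_subtype_eq,
    ← LinearMap.ker_domRestrict]
  exact Module.Dual.finrank_ker_add_one_of_ne_zero hf

section Matching

variable {V : Type*}

@[simp]
theorem avoid_adj {G : SimpleGraph V} {S : Set V} {a b : V} :
    (avoid G S).Adj a b ↔ G.Adj a b ∧ a ∉ S ∧ b ∉ S := Iff.rfl

theorem adj_of_neighborSet_eq {H : SimpleGraph V} {u w : V} (h : H.neighborSet u = {w}) :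
    H.Adj u w := by
  rw [← mem_neighborSet, h]
  rfl

theorem avoid_le (G : SimpleGraph V) (S : Set V) : avoid G S ≤ G := fun _ _ h => h.1

theorem mem_edgeSet_avoid {G : SimpleGraph V} {S : Set V} {e : Sym2 V} :
    e ∈ (avoid G S).edgeSet ↔ e ∈ G.edgeSet ∧ ∀ v ∈ e, v ∉ S := by
  induction e using Sym2.ind
  simp

theorem isMatchingSet_empty (G : SimpleGraph V) : IsMatchingSet G ∅ :=
  ⟨Set.empty_subset _, Set.pairwise_empty _⟩

theorem isMatchingSet_avoid_iff {G : SimpleGraph V} {S : Set V} {M : Set (Sym2 V)} :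
    IsMatchingSet (avoid G S) M ↔ IsMatchingSet G M ∧ ∀ e ∈ M, ∀ v ∈ e, v ∉ S := by
  simp only [IsMatchingSet, Set.subset_def, mem_edgeSet_avoid]
  grind

variable [Fintype V]

theorem IsMatchingSet.ncard_setOf_mem_le_one {G : SimpleGraph V} {M : Set (Sym2 V)}
    (hM : IsMatchingSet G M) (v : V) : {e ∈ M | v ∈ e}.ncard ≤ 1 := by
  rw [Set.ncard_le_one]
  rintro e ⟨he, hve⟩ f ⟨hf, hvf⟩
  by_contra hef
  exact hM.2 he hf hef v ⟨hve, hvf⟩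

theorem bddAbove_ncard_isMatchingSet (G : SimpleGraph V) :
    BddAbove {n | ∃ M : Set (Sym2 V), IsMatchingSet G M ∧ M.ncard = n} :=
  ⟨Nat.card (Sym2 V), by
    rintro n ⟨M, -, rfl⟩
    exact Set.ncard_le_card M⟩

theorem IsMatchingSet.ncard_le_matchNum {G : SimpleGraph V} {M : Set (Sym2 V)}
    (hM : IsMatchingSet G M) : M.ncard ≤ matchNum G :=
  le_csSup (bddAbove_ncard_isMatchingSet G) ⟨M, hM, rfl⟩

theorem exists_isMaxMatching (G : SimpleGraph V) : ∃ M, IsMaxMatching G M := by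
  have hne : {n | ∃ M : Set (Sym2 V), IsMatchingSet G M ∧ M.ncard = n}.Nonempty :=
    ⟨0, ∅, isMatchingSet_empty G, Set.ncard_empty _⟩
  obtain ⟨M, hM, hcard⟩ := Nat.sSup_mem hne (bddAbove_ncard_isMatchingSet G)
  exact ⟨M, hM, hcard⟩

theorem matchNum_avoid_le (G : SimpleGraph V) (S : Set V) :
    matchNum (avoid G S) ≤ matchNum G := by
  obtain ⟨M, hM, hcard⟩ := exists_isMaxMatching (avoid G S)
  exact hcard ▸ (isMatchingSet_avoid_iff.mp hM).1.ncard_le_matchNum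

theorem exists_isMaxMatching_not_saturates_iff {G : SimpleGraph V} {v : V} :
    (∃ M, IsMaxMatching G M ∧ ¬ Saturates M v) ↔ matchNum (avoid G {v}) = matchNum G := by
  constructor
  · rintro ⟨M, ⟨hM, hcard⟩, hv⟩
    have hM' : IsMatchingSet (avoid G {v}) M :=
      isMatchingSet_avoid_iff.mpr ⟨hM, fun e he x hx hxv => hv ⟨e, he, hxv ▸ hx⟩⟩
    exact (matchNum_avoid_le G _).antisymm (hcard ▸ hM'.ncard_le_matchNum)
  · intro h
    obtain ⟨M, hM, hcard⟩ := exists_isMaxMatching (avoid G {v})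
    rw [isMatchingSet_avoid_iff] at hM
    exact ⟨M, ⟨hM.1, hcard.trans h⟩, fun ⟨e, he, hv⟩ => hM.2 e he v hv rfl⟩

theorem matchNum_bot : matchNum (⊥ : SimpleGraph V) = 0 := by
  obtain ⟨M, hM, hcard⟩ := exists_isMaxMatching (⊥ : SimpleGraph V)
  have hM : M = ∅ := Set.subset_empty_iff.mp (by simpa using hM.1)
  rw [← hcard, hM, Set.ncard_empty]

theorem matchNum_avoid_add_one_of_neighborSet_eq {H : SimpleGraph V} {u w : V}
    (h : H.neighborSet u = {w}) : matchNum (avoid H {u, w}) + 1 = matchNum H := by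
  have hadj := adj_of_neighborSet_eq h
  apply le_antisymm
  · obtain ⟨M, hM, hcard⟩ := exists_isMaxMatching (avoid H {u, w})
    rw [isMatchingSet_avoid_iff] at hM
    have huw : s(u, w) ∉ M := fun he => hM.2 _ he u (by simp) (by simp)
    have hM' : IsMatchingSet H (insert s(u, w) M) := by
      refine ⟨Set.insert_subset hadj hM.1.1,
        Set.pairwise_insert.mpr ⟨hM.1.2, fun f hf _ => ?_⟩⟩
      have hdisj : ∀ x, ¬(x ∈ s(u, w) ∧ x ∈ f) := fun x ⟨hx, hxf⟩ =>
        hM.2 f hf x hxf (by simpa using hx)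
      exact ⟨hdisj, fun x hx => hdisj x hx.symm⟩
    rw [← hcard, ← Set.ncard_insert_of_notMem huw]
    exact hM'.ncard_le_matchNum
  · obtain ⟨M, hM, hcard⟩ := exists_isMaxMatching H
    set D := {e ∈ M | w ∈ e}
    -- the only edge at the leaf `u` is `s(u, w)`, so `M \ D` avoids `u` as well as `w`
    have hM' : IsMatchingSet (avoid H {u, w}) (M \ D) := by
      refine isMatchingSet_avoid_iff.mpr
        ⟨⟨Set.sdiff_subset.trans hM.1, hM.2.mono Set.sdiff_subset⟩, ?_⟩
      rintro e ⟨heM, heD⟩ x hxe (rfl | rfl)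
      · obtain ⟨y, rfl⟩ := Sym2.mem_iff_exists.mp hxe
        have hy : y = w := by
          rw [← Set.mem_singleton_iff, ← h]
          exact hM.1 heM
        exact heD ⟨heM, hy ▸ Sym2.mem_mk_right x y⟩
      · exact heD ⟨heM, hxe⟩
    calc matchNum H = M.ncard := hcard.symm
      _ ≤ (M \ D).ncard + D.ncard := Set.ncard_le_ncard_sdiff_add_ncard M D
      _ ≤ matchNum (avoid H {u, w}) + 1 :=
        add_le_add hM'.ncard_le_matchNum (hM.ncard_setOf_mem_le_one w)

end Matching

section NullSpace

variable {V : Type*} [Fintype V]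

noncomputable def nullSpace (G : SimpleGraph V) : Submodule ℝ (V → ℝ) :=
  LinearMap.ker (G.adjMatrix ℝ).mulVecLin

theorem mem_nullSpace {G : SimpleGraph V} {x : V → ℝ} :
    x ∈ nullSpace G ↔ G.adjMatrix ℝ *ᵥ x = 0 := Iff.rfl

theorem finrank_nullSpace_bot :
    Module.finrank ℝ (nullSpace (⊥ : SimpleGraph V)) = Fintype.card V := by
  have : nullSpace (⊥ : SimpleGraph V) = ⊤ := by
    ext x
    simp [mem_nullSpace, funext_iff, Matrix.mulVec, dotProduct]
  rw [this, finrank_top, Module.finrank_fintype_fun_eq_card]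

theorem adjMatrix_avoid_mulVec {G : SimpleGraph V} {S : Set V} {x : V → ℝ}
    (hx : ∀ s ∈ S, x s = 0) :
    (avoid G S).adjMatrix ℝ *ᵥ x = Sᶜ.indicator (G.adjMatrix ℝ *ᵥ x) := by
  ext t
  by_cases ht : t ∈ S
  · simp [ht, Matrix.mulVec, dotProduct, adjMatrix_apply]
  · rw [Set.indicator_of_mem (show t ∈ Sᶜ from ht)]
    refine Finset.sum_congr rfl fun s _ => ?_
    by_cases hs : s ∈ S
    · simp [hx s hs]
    · simp [adjMatrix_apply, ht, hs]

theorem mem_nullSpace_avoid_iff {G : SimpleGraph V} {S : Set V} {x : V → ℝ}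
    (hx : ∀ s ∈ S, x s = 0) :
    x ∈ nullSpace (avoid G S) ↔ ∀ t ∉ S, (G.adjMatrix ℝ *ᵥ x) t = 0 := by
  simp [mem_nullSpace, adjMatrix_avoid_mulVec hx, funext_iff, Set.indicator_apply_eq_zero]

theorem single_mem_nullSpace_avoid (G : SimpleGraph V) {S : Set V} {v : V} (hv : v ∈ S) :
    Pi.single v 1 ∈ nullSpace (avoid G S) := by
  ext t
  simp [hv]

theorem nullSpace_inf_ker_proj_le_avoid (G : SimpleGraph V) (v : V) :
    nullSpace G ⊓ LinearMap.ker (LinearMap.proj v) ≤ nullSpace (avoid G {v}) := by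
  rintro x ⟨hx, hxv : x v = 0⟩
  rw [mem_nullSpace_avoid_iff (by simpa using hxv), mem_nullSpace.mp hx]
  simp

theorem nullSpace_avoid_inf_ker_proj_le {G : SimpleGraph V} {v : V} (hv : v ∈ nullSupp G) :
    nullSpace (avoid G {v}) ⊓ LinearMap.ker (LinearMap.proj v) ≤ nullSpace G := by
  intro z hz
  obtain ⟨hz, hzv : z v = 0⟩ := Submodule.mem_inf.mp hz
  obtain ⟨x, hx, hxv⟩ := hv
  rw [mem_nullSpace_avoid_iff (by simpa using hzv)] at hz
  have hAz : G.adjMatrix ℝ *ᵥ z = Pi.single v ((G.adjMatrix ℝ *ᵥ z) v) := by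
    ext t
    by_cases ht : t = v
    · simp [ht]
    · simp [ht, hz t ht]
  -- `A` is symmetric, so `A z` is orthogonal to the null vector `x`.
  have horth : x ⬝ᵥ G.adjMatrix ℝ *ᵥ z = 0 := by
    rw [dotProduct_mulVec, ← transpose_adjMatrix, vecMul_transpose, hx, zero_dotProduct]
  rw [hAz, dotProduct_single, mul_eq_zero] at horth
  rw [mem_nullSpace, hAz, horth.resolve_left hxv, Pi.single_zero]

theorem finrank_nullSpace_avoid_singleton (G : SimpleGraph V) (v : V) :
    Module.finrank ℝ ↥(nullSpace (avoid G {v}) ⊓ LinearMap.ker (LinearMap.proj v)) + 1 =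
      Module.finrank ℝ (nullSpace (avoid G {v})) :=
  Submodule.finrank_inf_ker_add_one (single_mem_nullSpace_avoid G rfl) (by simp)

theorem finrank_nullSpace_avoid_of_mem_nullSupp {G : SimpleGraph V} {v : V}
    (hv : v ∈ nullSupp G) :
    Module.finrank ℝ (nullSpace (avoid G {v})) = Module.finrank ℝ (nullSpace G) := by
  have hsame : nullSpace G ⊓ LinearMap.ker (LinearMap.proj v) =
      nullSpace (avoid G {v}) ⊓ LinearMap.ker (LinearMap.proj v) :=
    le_antisymm (le_inf (nullSpace_inf_ker_proj_le_avoid G v) inf_le_right)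
      (le_inf (nullSpace_avoid_inf_ker_proj_le hv) inf_le_right)
  obtain ⟨x, hx, hxv⟩ := hv
  rw [← finrank_nullSpace_avoid_singleton, ← hsame]
  exact Submodule.finrank_inf_ker_add_one hx hxv

theorem finrank_nullSpace_lt_avoid_of_notMem_nullSupp {G : SimpleGraph V} {v : V}
    (hv : v ∉ nullSupp G) :
    Module.finrank ℝ (nullSpace G) < Module.finrank ℝ (nullSpace (avoid G {v})) := by
  have hker : nullSpace G ≤ LinearMap.ker (LinearMap.proj v) :=
    fun x hx => not_not.mp fun hxv => hv ⟨x, hx, hxv⟩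
  have hle : nullSpace G ≤ nullSpace (avoid G {v}) ⊓ LinearMap.ker (LinearMap.proj v) :=
    le_inf ((le_inf le_rfl hker).trans (nullSpace_inf_ker_proj_le_avoid G v)) hker
  rw [← finrank_nullSpace_avoid_singleton]
  exact Nat.lt_succ_of_le (Submodule.finrank_mono hle)

end NullSpace

section Leaf

variable {V : Type*} [Fintype V]

/-- The solutions of all equations of `A x = 0` except the one at `w`. -/
noncomputable def nullSpaceExcept (G : SimpleGraph V) (w : V) : Submodule ℝ (V → ℝ) :=
  (Submodule.pi {w}ᶜ fun _ => ⊥).comap (G.adjMatrix ℝ).mulVecLin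

theorem mem_nullSpaceExcept {G : SimpleGraph V} {w : V} {x : V → ℝ} :
    x ∈ nullSpaceExcept G w ↔ ∀ t ≠ w, (G.adjMatrix ℝ *ᵥ x) t = 0 := by
  simp [nullSpaceExcept]

theorem nullSpace_eq_nullSpaceExcept_inf (G : SimpleGraph V) (w : V) :
    nullSpace G =
      nullSpaceExcept G w ⊓ LinearMap.ker (LinearMap.proj w ∘ₗ (G.adjMatrix ℝ).mulVecLin) := by
  ext x
  rw [Submodule.mem_inf, mem_nullSpaceExcept, mem_nullSpace, funext_iff]
  refine ⟨fun hx => ⟨fun t _ => hx t, hx w⟩, fun ⟨hx, hxw⟩ t => ?_⟩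
  rcases eq_or_ne t w with rfl | ht
  exacts [hxw, hx t ht]

variable {H : SimpleGraph V} {u w : V}

theorem adjMatrix_mulVec_apply_of_neighborSet_eq (h : H.neighborSet u = {w}) (x : V → ℝ) :
    (H.adjMatrix ℝ *ᵥ x) u = x w := by
  rw [adjMatrix_mulVec_apply, neighborFinset, Set.toFinset_congr h, Set.toFinset_singleton,
    Finset.sum_singleton]

theorem adjMatrix_mulVec_single_of_neighborSet_eq (h : H.neighborSet u = {w}) :
    H.adjMatrix ℝ *ᵥ Pi.single u 1 = Pi.single w 1 := by
  ext t
  have : H.Adj t u ↔ t = w := by rw [adj_comm, ← mem_neighborSet, h, Set.mem_singleton_iff]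
  simp [this, Pi.single_apply]

theorem nullSpaceExcept_inf_ker_proj_of_neighborSet_eq (h : H.neighborSet u = {w}) :
    nullSpaceExcept H w ⊓ LinearMap.ker (LinearMap.proj u) =
      nullSpace (avoid H {u, w}) ⊓ LinearMap.ker (LinearMap.proj u) ⊓
        LinearMap.ker (LinearMap.proj w) := by
  ext x
  simp only [Submodule.mem_inf, mem_nullSpaceExcept, LinearMap.mem_ker, LinearMap.proj_apply]
  constructor
  · rintro ⟨hx, hxu⟩
    have hxw : x w = 0 := by
      rw [← adjMatrix_mulVec_apply_of_neighborSet_eq h x]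
      exact hx u (adj_of_neighborSet_eq h).ne
    rw [mem_nullSpace_avoid_iff (by simp [hxu, hxw])]
    exact ⟨⟨fun t ht => hx t (by simp_all), hxu⟩, hxw⟩
  · rintro ⟨⟨hx, hxu⟩, hxw⟩
    rw [mem_nullSpace_avoid_iff (by simp [hxu, hxw])] at hx
    refine ⟨fun t htw => ?_, hxu⟩
    rcases eq_or_ne t u with rfl | htu
    · rwa [adjMatrix_mulVec_apply_of_neighborSet_eq h]
    · exact hx t (by simp [htu, htw])

theorem finrank_nullSpace_avoid_of_neighborSet_eq (h : H.neighborSet u = {w}) :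
    Module.finrank ℝ (nullSpace (avoid H {u, w})) = Module.finrank ℝ (nullSpace H) + 2 := by
  -- `nullSpace H` and `nullSpaceExcept H w ⊓ ker (proj u)` are hyperplanes of
  -- `nullSpaceExcept H w`, and the latter has codimension two in `nullSpace (avoid H {u, w})`.
  have hadj := adj_of_neighborSet_eq h
  have hAu := adjMatrix_mulVec_single_of_neighborSet_eq h
  have hu : Pi.single u 1 ∈ nullSpaceExcept H w :=
    mem_nullSpaceExcept.mpr fun t ht => by rw [hAu, Pi.single_eq_of_ne ht]
  have h1 := Submodule.finrank_inf_ker_add_one hu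
    (f := LinearMap.proj w ∘ₗ (H.adjMatrix ℝ).mulVecLin) (by simpa using hadj.symm)
  have h2 := Submodule.finrank_inf_ker_add_one hu (f := LinearMap.proj u) (by simp)
  have h3 := Submodule.finrank_inf_ker_add_one (f := LinearMap.proj u)
    (single_mem_nullSpace_avoid H (show u ∈ ({u, w} : Set V) by simp)) (by simp)
  have h4 := Submodule.finrank_inf_ker_add_one (x := Pi.single w 1) (f := LinearMap.proj w)
    (p := nullSpace (avoid H {u, w}) ⊓ LinearMap.ker (LinearMap.proj u))
    ⟨single_mem_nullSpace_avoid H (by simp), by simp [hadj.ne]⟩ (by simp)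
  rw [← nullSpace_eq_nullSpaceExcept_inf] at h1
  rw [nullSpaceExcept_inf_ker_proj_of_neighborSet_eq h] at h2
  omega

end Leaf

section Forest

variable {V : Type*} [Fintype V]

theorem SimpleGraph.IsAcyclic.exists_neighborSet_eq_singleton {H : SimpleGraph V}
    (hH : H.IsAcyclic) (hne : H ≠ ⊥) : ∃ u w, H.neighborSet u = {w} := by
  obtain ⟨a, b, hab⟩ := ne_bot_iff_exists_adj.mp hne
  have : Nonempty V := ⟨a⟩
  -- an end `u` of a longest path is a leaf: a neighbour off the path would extend it
  obtain ⟨u, v, p, hp, hmax⟩ := Walk.exists_isPath_forall_isPath_length_le_length H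
  have hnil : ¬p.Nil := fun hp0 => by
    simpa [hp0.length_eq_zero] using hmax a b (.cons hab .nil) (by simp [hab.ne])
  refine ⟨u, p.snd, Set.eq_singleton_iff_unique_mem.mpr ⟨p.adj_snd hnil, fun w hw => ?_⟩⟩
  refine hH.eq_snd_of_adj_start hp hw (not_not.mp fun hwp => ?_)
  simpa using hmax w v (.cons hw.symm p) (hp.cons hwp)

theorem SimpleGraph.IsAcyclic.finrank_nullSpace_add_two_mul_matchNum {H : SimpleGraph V}
    (hH : H.IsAcyclic) : Module.finrank ℝ (nullSpace H) + 2 * matchNum H = Fintype.card V := by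
  induction H using WellFoundedLT.induction with
  | _ H ih =>
  rcases eq_or_ne H ⊥ with rfl | hne
  · rw [finrank_nullSpace_bot, matchNum_bot, mul_zero, add_zero]
  obtain ⟨u, w, h⟩ := hH.exists_neighborSet_eq_singleton hne
  have hlt : avoid H {u, w} < H :=
    (avoid_le H _).lt_of_ne fun heq => by
      have hadj := adj_of_neighborSet_eq h
      rw [← heq] at hadj
      simp at hadj
  have := ih _ hlt (hH.anti (avoid_le H _))
  rw [finrank_nullSpace_avoid_of_neighborSet_eq h] at this
  rw [← matchNum_avoid_add_one_of_neighborSet_eq h]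
  omega

end Forest

theorem edmondsGallai_eq_supp {V : Type*} [Fintype V] (G : SimpleGraph V) (hT : G.IsTree) :
    {v : V | ∃ M : Set (Sym2 V), IsMaxMatching G M ∧ ¬ Saturates M v} = nullSupp G := by
  ext v
  rw [Set.mem_ofPred_eq, exists_isMaxMatching_not_saturates_iff]
  have hG := hT.isAcyclic.finrank_nullSpace_add_two_mul_matchNum
  have hGv := (hT.isAcyclic.anti (avoid_le G {v})).finrank_nullSpace_add_two_mul_matchNum
  by_cases hv : v ∈ nullSupp G
  · have := finrank_nullSpace_avoid_of_mem_nullSupp hv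
    simp only [hv, iff_true]
    omega
  · have := finrank_nullSpace_lt_avoid_of_notMem_nullSupp hv
    simp only [hv, iff_false]
    omega
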